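/- For n ≥ 3, the upper bound in the range inequality is sharp: taking x_1 = -1, x_2 = ... = x_{n-1} = 0, x_n = 1, the mean is 0, the sample variance (with divisor n-1) equals 2/(n-1), and the range x_n - x_1 = 2 equals √(2(n-1)) times the sample standard deviation. -/
import Mathlib


theorem range_upper_bound_sharp (n : ℕ) (hn : 3 ≤ n) (x : Fin n → ℝ)
    (hx : ∀ i : Fin n, x i = if (i : ℕ) = 0 then -1 else if (i : ℕ) = n - 1 then 1 else 0) :
    (∑ i, x i) / n = 0 ∧
    (1 / ((n : ℝ) - 1)) * ∑ i, (x i - (∑ j, x j) / n) ^ 2 = 2 / ((n : ℝ) - 1) ∧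
    x ⟨n - 1, by omega⟩ - x ⟨0, by omega⟩
      = Real.sqrt (2 * ((n : ℝ) - 1)) * Real.sqrt (2 / ((n : ℝ) - 1)) := by
  set i0 : Fin n := ⟨0, by omega⟩
  set i1 : Fin n := ⟨n - 1, by omega⟩
  have hne : i0 ≠ i1 := by
    intro h
    have := congrArg Fin.val h
    simp only [i0, i1] at this
    omega
  have hval : ∀ i : Fin n, x i = (if i = i0 then (-1:ℝ) else 0) + (if i = i1 then 1 else 0) := by
    intro i
    rw [hx i]
    rcases eq_or_ne i i0 with h | h
    · subst h
      simp [hne, i0]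
    · have h0 : (i : ℕ) ≠ 0 := by
        intro hc; apply h; apply Fin.ext; simpa [i0] using hc
      rcases eq_or_ne i i1 with h1 | h1
      · subst h1
        rw [if_neg h0, if_pos (show ((i1:ℕ)) = n - 1 from rfl), if_neg (Ne.symm hne),
          if_pos rfl]
        norm_num
      · have h1' : (i : ℕ) ≠ n - 1 := by
          intro hc; apply h1; apply Fin.ext; simpa [i1] using hc
        rw [if_neg h0, if_neg h1', if_neg h, if_neg h1]
        norm_num
  have hsum : (∑ i, x i) = 0 := by
    rw [Finset.sum_congr rfl (fun i _ => hval i)]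
    rw [Finset.sum_add_distrib]
    simp
  have hsq : (∑ i, (x i) ^ 2) = 2 := by
    have : ∀ i : Fin n, (x i) ^ 2 = (if i = i0 then (1:ℝ) else 0) + (if i = i1 then 1 else 0) := by
      intro i
      rw [hval i]
      rcases eq_or_ne i i0 with h | h
      · subst h; simp [hne]
      · rcases eq_or_ne i i1 with h1 | h1
        · subst h1; simp [Ne.symm hne, h]
        · simp [h, h1]
    rw [Finset.sum_congr rfl (fun i _ => this i), Finset.sum_add_distrib]
    norm_num
  have hmean : (∑ i, x i) / n = 0 := by rw [hsum]; simp
  refine ⟨hmean, ?_, ?_⟩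
  · have hn1 : ((n : ℝ) - 1) ≠ 0 := by
      have : (3:ℝ) ≤ n := by exact_mod_cast hn
      linarith
    rw [hmean]
    simp only [sub_zero]
    rw [hsq]
    field_simp
  · have hx0 : x i0 = -1 := by rw [hval i0]; simp [hne]
    have hx1 : x i1 = 1 := by rw [hval i1]; simp [Ne.symm hne]
    have hn1 : (0:ℝ) < (n : ℝ) - 1 := by
      have : (3:ℝ) ≤ n := by exact_mod_cast hn
      linarith
    rw [hx0, hx1]
    rw [← Real.sqrt_mul (by positivity)]
    rw [show 2 * ((n : ℝ) - 1) * (2 / ((n : ℝ) - 1)) = 4 by field_simp; ring]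
    rw [show (4:ℝ) = 2^2 by norm_num, Real.sqrt_sq (by norm_num)]
    ring
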